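/- arXiv:2106.02398 — 6 statements merged into one kernel-verified Lean document; each statement's English description precedes it below -/
import Mathlib

section
/- Let σ(z) = 1/(1+e^(−z)) and let k > 0. Define d_k = σ(k+1) − σ(k). Then for any b with |b| ≤ k and any a ∈ ℝ, (a−b)(σ(a)−σ(b)) ≥ d_k |a−b| − d_k. -/
/-!
The sigmoid is increasing, so `(a - b)(σ a - σ b) ≥ 0`, which settles `|a - b| ≤ 1`; for
`|a - b| > 1` it suffices that both unit increments `σ (b + 1) - σ b` and `σ b - σ (b - 1)` are
at least `d_k`. The unit increment `σ (t + 1) - σ t` is a decreasing function of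
`cosh (t + 1/2)`, hence of `|t + 1/2|`, and `|b ± 1/2| ≤ k + 1/2` when `|b| ≤ k`.
-/

open Real

theorem Monotone.mul_abs_sub_sub_le_sub_mul_sub {f : ℝ → ℝ} (hf : Monotone f) {b d : ℝ}
    (hd : 0 ≤ d) (h_right : d ≤ f (b + 1) - f b) (h_left : d ≤ f b - f (b - 1)) (a : ℝ) :
    d * |a - b| - d ≤ (a - b) * (f a - f b) := by
  rcases le_or_gt (|a - b|) 1 with hab | hab
  · have hnonneg : 0 ≤ (a - b) * (f a - f b) := by
      rcases le_total a b with h | h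
      · exact mul_nonneg_of_nonpos_of_nonpos (by linarith) (sub_nonpos.2 (hf h))
      · exact mul_nonneg (by linarith) (sub_nonneg.2 (hf h))
    nlinarith
  rcases lt_abs.1 hab with hab | hab
  · have hfa : f (b + 1) ≤ f a := hf (by linarith)
    calc d * |a - b| - d ≤ (a - b) * d := by rw [abs_of_pos (by linarith)]; linarith
      _ ≤ (a - b) * (f a - f b) := mul_le_mul_of_nonneg_left (by linarith) (by linarith)
  · have hfa : f a ≤ f (b - 1) := hf (by linarith)
    calc d * |a - b| - d ≤ (b - a) * d := by rw [abs_of_neg (by linarith)]; linarith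
      _ ≤ (b - a) * (f b - f a) := mul_le_mul_of_nonneg_left (by linarith) (by linarith)
      _ = (a - b) * (f a - f b) := by ring

theorem Real.sigmoid_add_one_sub_sigmoid (t : ℝ) :
    sigmoid (t + 1) - sigmoid t =
      (1 - exp (-1)) / (1 + exp (-1) + 2 * exp (-2⁻¹) * cosh (t + 2⁻¹)) := by
  have h_exp_one : exp 1 = exp 2⁻¹ ^ 2 := by rw [← exp_nat_mul]; norm_num
  simp only [sigmoid_def, cosh_eq, neg_add, exp_add, exp_neg, h_exp_one]
  field_simp
  ring

theorem Real.sigmoid_add_one_sub_sigmoid_le {s t : ℝ} (h : |t + 2⁻¹| ≤ |s + 2⁻¹|) :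
    sigmoid (s + 1) - sigmoid s ≤ sigmoid (t + 1) - sigmoid t := by
  rw [sigmoid_add_one_sub_sigmoid, sigmoid_add_one_sub_sigmoid]
  gcongr
  · exact sub_nonneg.2 (exp_le_one_iff.2 (by norm_num))
  · exact cosh_le_cosh.2 h

theorem stmt_4_general (σ : ℝ → ℝ) (hσ : ∀ z, σ z = (1 + Real.exp (-z))⁻¹)
    (k : ℝ) (b : ℝ) (hb : |b| ≤ k) (a : ℝ) :
    (σ (k + 1) - σ k) * |a - b| - (σ (k + 1) - σ k) ≤ (a - b) * (σ a - σ b) := by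
  obtain rfl : σ = sigmoid := funext hσ
  have hb_half : |b + 2⁻¹| ≤ |k + 2⁻¹| ∧ |b - 1 + 2⁻¹| ≤ |k + 2⁻¹| := by
    have hb_bounds := abs_le.1 hb
    rw [abs_of_pos (a := k + 2⁻¹) (by linarith [abs_nonneg b])]
    constructor <;> rw [abs_le] <;> constructor <;> linarith
  refine sigmoid_monotone.mul_abs_sub_sub_le_sub_mul_sub (sub_nonneg.2 (sigmoid_le (by linarith)))
    (sigmoid_add_one_sub_sigmoid_le hb_half.1) ?_ a
  simpa only [sub_add_cancel] using sigmoid_add_one_sub_sigmoid_le hb_half.2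

/-- For the logistic sigmoid `σ`, `k > 0` and `d_k = σ(k+1) - σ(k)`: for any `|b| ≤ k`
and any `a`, `(a-b)(σ a - σ b) ≥ d_k |a-b| - d_k`. -/
theorem stmt_4 (σ : ℝ → ℝ) (hσ : ∀ z, σ z = (1 + Real.exp (-z))⁻¹)
    (k : ℝ) (hk : 0 < k) (b : ℝ) (hb : |b| ≤ k) (a : ℝ) :
    (σ (k + 1) - σ k) * |a - b| - (σ (k + 1) - σ k) ≤ (a - b) * (σ a - σ b) :=
  stmt_4_general σ hσ k b hb a
end

section
/- Let f : ℝ → [0,∞) be strictly convex and define F(ρ, w) = f(ρ) + |ρ − w|. Then for every w ∈ ℝ, F(·, w) attains a unique minimizer ρ*(w), and the map w ↦ ρ*(w) is nondecreasing. -/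
/-!
Since `f` is bounded below, the penalty `|ρ - w|` makes `f + |· - w|` coercive, so a minimizer
exists; adding the convex `|ρ - w|` to the strictly convex `f` keeps it strictly convex, so the
minimizer is unique. Monotonicity comes from the submodularity of `(ρ, w) ↦ |ρ - w|`: if
`w₁ ≤ w₂` but `ρ*(w₂) < ρ*(w₁)`, exchanging the two minimizers shows that `ρ*(w₂)` also
minimizes the problem at `w₁`, contradicting uniqueness.
-/

open Filter Set

theorem Continuous.exists_forall_add_dist_le {E : Type*} [MetricSpace E] [ProperSpace E]
    [Nonempty E] {f : E → ℝ} (hf : Continuous f) {C : ℝ} (hfC : ∀ x, C ≤ f x) (w : E) :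
    ∃ x, ∀ y, f x + dist x w ≤ f y + dist y w :=
  (hf.add (continuous_id.dist continuous_const)).exists_forall_le
    (tendsto_atTop_add_left_of_le _ C hfC (tendsto_dist_right_cocompact_atTop w))

theorem abs_sub_add_abs_sub_le_of_le {a b v w : ℝ} (hab : a ≤ b) (hvw : v ≤ w) :
    |b - w| + |a - v| ≤ |b - v| + |a - w| := by
  rcases abs_cases (b - w) with ⟨h₁, _⟩ | ⟨h₁, _⟩ <;>
  rcases abs_cases (a - v) with ⟨h₂, _⟩ | ⟨h₂, _⟩ <;>
  rcases abs_cases (b - v) with ⟨h₃, _⟩ | ⟨h₃, _⟩ <;>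
  rcases abs_cases (a - w) with ⟨h₄, _⟩ | ⟨h₄, _⟩ <;> linarith

theorem monotone_of_isUniqueMin_add_abs_sub {f ρs : ℝ → ℝ}
    (hmin : ∀ w ρ, f (ρs w) + |ρs w - w| ≤ f ρ + |ρ - w|)
    (huniq : ∀ w ρ, (∀ ρ', f ρ + |ρ - w| ≤ f ρ' + |ρ' - w|) → ρ = ρs w) :
    Monotone ρs := by
  intro w₁ w₂ hw
  by_contra! hlt
  have hexchange : ∀ ρ', f (ρs w₂) + |ρs w₂ - w₁| ≤ f ρ' + |ρ' - w₁| := fun ρ' => by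
    have := abs_sub_add_abs_sub_le_of_le hlt.le hw
    linarith [hmin w₂ (ρs w₁), hmin w₁ ρ']
  exact hlt.ne (huniq w₁ _ hexchange)

/-- For strictly convex nonnegative `f : ℝ → ℝ`, the function `F(ρ,w) = f(ρ) + |ρ - w|`
admits for each `w` a unique minimizer `ρ*(w)` in `ρ`, and `w ↦ ρ*(w)` is nondecreasing. -/
theorem stmt_14 (f : ℝ → ℝ) (hf0 : ∀ x, 0 ≤ f x)
    (hf : StrictConvexOn ℝ Set.univ f) :
    ∃ ρs : ℝ → ℝ,
      (∀ w, (∀ ρ, f (ρs w) + |ρs w - w| ≤ f ρ + |ρ - w|) ∧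
        (∀ ρ, (∀ ρ', f ρ + |ρ - w| ≤ f ρ' + |ρ' - w|) → ρ = ρs w)) ∧
      Monotone ρs := by
  have hfc : Continuous f := continuousOn_univ.mp (hf.convexOn.continuousOn isOpen_univ)
  have hex (w : ℝ) : ∃ ρ, ∀ ρ', f ρ + |ρ - w| ≤ f ρ' + |ρ' - w| := by
    simpa only [Real.dist_eq] using hfc.exists_forall_add_dist_le hf0 w
  choose ρs hmin using hex
  have huniq (w ρ : ℝ) (hρ : ∀ ρ', f ρ + |ρ - w| ≤ f ρ' + |ρ' - w|) : ρ = ρs w := by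
    have hFw : StrictConvexOn ℝ univ fun ρ => f ρ + |ρ - w| :=
      hf.add_convexOn (by simpa only [Real.dist_eq] using convexOn_univ_dist w)
    exact hFw.eq_of_isMinOn (isMinOn_univ_iff.mpr hρ) (isMinOn_univ_iff.mpr (hmin w))
      (mem_univ _) (mem_univ _)
  exact ⟨ρs, fun w => ⟨hmin w, huniq w⟩, monotone_of_isUniqueMin_add_abs_sub hmin huniq⟩
end

section
/- Let f : ℝ → [0,∞) be strictly convex and ρ*(w) = argmin_ρ (f(ρ) + |ρ − w|). Then for all θ, w ∈ ℝ, |ρ*(θ) − θ| ≤ |ρ*(w) − θ|. In other words, reporting one's true value θ minimizes the distance from ρ*(w) to θ over all possible reports w. -/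
/-!
If `ρ*(θ) > θ`, then `F ρ = f ρ + ρ` satisfies `F (ρ*(θ)) < F θ`, and `F (ρ*(θ)) < F x` for every
`x ∈ [θ, ρ*(θ))`; since `F` is convex, also for every `x < θ`. On the other hand every value
`x = ρ*(w)` satisfies `f x < f ρ + |ρ - x|` for `ρ ≠ x`, so `F x < F ρ` whenever `x < ρ`. Hence
`ρ*(θ)` is the least value of `ρ*`, and no report brings `ρ*(w)` closer to `θ`.
The case `ρ*(θ) < θ` follows by the reflection `ρ ↦ -ρ`.
-/

open Set

/-- `ρs` is the map `ρ*`: `ρs w` is the unique minimizer of `ρ ↦ f ρ + |ρ - w|`. -/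
def IsAbsPenaltyArgmin (f ρs : ℝ → ℝ) : Prop :=
  ∀ w ρ, ρ ≠ ρs w → f (ρs w) + |ρs w - w| < f ρ + |ρ - w|

namespace IsAbsPenaltyArgmin

variable {f ρs : ℝ → ℝ}

theorem lt_add_abs_sub (h : IsAbsPenaltyArgmin f ρs) {w ρ : ℝ} (hρ : ρ ≠ ρs w) :
    f (ρs w) < f ρ + |ρ - ρs w| := by
  have hmin := h w ρ hρ
  have htri := abs_sub_le ρ (ρs w) w
  linarith

theorem comp_neg (h : IsAbsPenaltyArgmin f ρs) :
    IsAbsPenaltyArgmin (fun x => f (-x)) (fun w => -ρs (-w)) := by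
  intro w ρ hρ
  have hρ' : -ρ ≠ ρs (-w) := fun h' => hρ (by simp [← h'])
  have habs : ∀ a b : ℝ, |-a - b| = |a - -b| := fun a b => by rw [← abs_neg]; ring_nf
  simpa only [neg_neg, habs] using h (-w) (-ρ) hρ'

theorem isLeast_range_of_lt_apply (hf : ConvexOn ℝ univ f) (h : IsAbsPenaltyArgmin f ρs)
    {θ : ℝ} (hθ : θ < ρs θ) : IsLeast (range ρs) (ρs θ) := by
  refine ⟨mem_range_self θ, ?_⟩
  rintro _ ⟨w, rfl⟩
  by_contra! hw
  set a := ρs θ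
  set x := ρs w
  have hxa : f x + x < f a + a := by
    have hlt := h.lt_add_abs_sub (w := w) hw.ne'
    rw [abs_of_pos (sub_pos.2 hw)] at hlt
    linarith
  have haθ : f a + a < f θ + θ := by
    have hmin := h θ θ hθ.ne
    rw [sub_self, abs_zero, abs_of_pos (sub_pos.2 hθ)] at hmin
    linarith
  rcases lt_or_ge x θ with hxθ | hθx
  · have hmax := (hf.add (convexOn_id convex_univ)).le_max_of_mem_Icc (mem_univ x)
      (mem_univ a) ⟨hxθ.le, hθ.le⟩
    simp only [Pi.add_apply, id, max_eq_right hxa.le] at hmax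
    linarith
  · have hmin := h θ x hw.ne
    rw [abs_of_pos (sub_pos.2 hθ), abs_of_nonneg (sub_nonneg.2 hθx)] at hmin
    linarith

theorem isGreatest_range_of_apply_lt (hf : ConvexOn ℝ univ f) (h : IsAbsPenaltyArgmin f ρs)
    {θ : ℝ} (hθ : ρs θ < θ) : IsGreatest (range ρs) (ρs θ) := by
  refine ⟨mem_range_self θ, ?_⟩
  rintro _ ⟨w, rfl⟩
  have hf' : ConvexOn ℝ univ (fun x => f (-x)) := hf.comp_linearMap (-LinearMap.id)
  have hleast := h.comp_neg.isLeast_range_of_lt_apply hf' (θ := -θ) (by simpa using hθ)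
  simpa using hleast.2 ⟨-w, rfl⟩

end IsAbsPenaltyArgmin

theorem stmt_16_general (f : ℝ → ℝ)
    (hf : StrictConvexOn ℝ Set.univ f)
    (ρs : ℝ → ℝ)
    (hρs : ∀ w ρ, ρ ≠ ρs w → f (ρs w) + |ρs w - w| < f ρ + |ρ - w|) :
    ∀ θ w : ℝ, |ρs θ - θ| ≤ |ρs w - θ| := by
  intro θ w
  rcases lt_trichotomy (ρs θ) θ with hθ | hθ | hθ
  · have hle := (IsAbsPenaltyArgmin.isGreatest_range_of_apply_lt hf.convexOn hρs hθ).2 ⟨w, rfl⟩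
    rw [abs_of_neg (sub_neg.2 hθ), neg_sub]
    exact (sub_le_sub_left hle θ).trans (neg_sub (ρs w) θ ▸ neg_le_abs _)
  · simp [hθ]
  · have hle := (IsAbsPenaltyArgmin.isLeast_range_of_lt_apply hf.convexOn hρs hθ).2 ⟨w, rfl⟩
    rw [abs_of_pos (sub_pos.2 hθ)]
    exact (sub_le_sub_right hle θ).trans (le_abs_self _)

/-- Strategyproofness in dimension 1: reporting `θ` truthfully minimizes the distance
from `ρ*(w)` to `θ`, where `ρ*(w)` minimizes `ρ ↦ f(ρ) + |ρ - w|`. -/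
theorem stmt_16 (f : ℝ → ℝ) (hf0 : ∀ x, 0 ≤ f x)
    (hf : StrictConvexOn ℝ Set.univ f)
    (ρs : ℝ → ℝ)
    (hρs : ∀ w ρ, ρ ≠ ρs w → f (ρs w) + |ρs w - w| < f ρ + |ρ - w|) :
    ∀ θ w : ℝ, |ρs θ - θ| ≤ |ρs w - θ| :=
  stmt_16_general f hf ρs hρs
end

section
/- Let f, g : ℝ → [0,∞) be strictly convex, ρ*(w) = argmin_ρ (f(ρ) + |ρ − w|) and τ*(ρ) = argmin_t (g(t) + |ρ − t|). Then for all θ, w ∈ ℝ, |τ*(ρ*(θ)) − θ| ≤ |τ*(ρ*(w)) − θ|. -/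
/-!
The maps `ρ*` and `τ*` are idempotent and monotone, and convexity makes them move every point
towards each of their fixed points: if `h p = p` then `h θ` lies between `θ` and `p`. Since
`ρ*(w)` is a fixed point of `ρ*`, `ρ*(θ)` lies between `θ` and `ρ*(w)`; since `τ*(ρ*(w))` is a
fixed point of `τ*`, `τ*(ρ*(θ))` lies between `ρ*(θ)` and `τ*(ρ*(w))`, and monotonicity of `τ*`
then puts it between `θ` and `τ*(ρ*(w))`.
-/

open Set

def IsAbsProx (f h : ℝ → ℝ) : Prop :=
  ∀ w ρ, ρ ≠ h w → f (h w) + |h w - w| < f ρ + |ρ - w|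

lemma abs_sub_add_abs_sub_le_of_le_s17 {u v x y : ℝ} (huv : u ≤ v) (hyx : y ≤ x) :
    |y - u| + |x - v| ≤ |x - u| + |y - v| := by
  rcases abs_cases (y - u) with ⟨h₁, _⟩ | ⟨h₁, _⟩ <;>
  rcases abs_cases (x - v) with ⟨h₂, _⟩ | ⟨h₂, _⟩ <;>
  rcases abs_cases (x - u) with ⟨h₃, _⟩ | ⟨h₃, _⟩ <;>
  rcases abs_cases (y - v) with ⟨h₄, _⟩ | ⟨h₄, _⟩ <;>
  linarith

lemma Monotone.apply_mem_uIcc_of_mem_uIcc {α : Type*} [LinearOrder α] {t : α → α}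
    (ht : Monotone t) {θ p a : α} (ha : a ∈ uIcc θ p) (hta : t a ∈ uIcc a (t p)) :
    t a ∈ uIcc θ (t p) := by
  rcases eq_or_ne a p with rfl | hne
  · exact right_mem_uIcc
  have hmono : a < p ∧ t a ≤ t p ∨ p < a ∧ t p ≤ t a := by
    rcases hne.lt_or_gt with hap | hpa
    exacts [.inl ⟨hap, ht hap.le⟩, .inr ⟨hpa, ht hpa.le⟩]
  rw [mem_uIcc] at *
  grind

namespace IsAbsProx

variable {f h : ℝ → ℝ}

lemma apply_apply (H : IsAbsProx f h) (w : ℝ) : h (h w) = h w := by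
  by_contra hne
  have h₁ := H (h w) (h w) (Ne.symm hne)
  have h₂ := H w (h (h w)) hne
  have := abs_sub_le (h (h w)) (h w) w
  rw [sub_self, abs_zero, add_zero] at h₁
  linarith

lemma monotone (H : IsAbsProx f h) : Monotone h := by
  intro u v huv
  by_contra! hlt
  have h₁ := H u (h v) hlt.ne
  have h₂ := H v (h u) hlt.ne'
  linarith [abs_sub_add_abs_sub_le_of_le_s17 huv hlt.le]

lemma comp_neg (H : IsAbsProx f h) : IsAbsProx (fun x ↦ f (-x)) (fun w ↦ -h (-w)) := by
  intro w ρ hρ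
  have key : ∀ a b : ℝ, |-a - b| = |a - -b| := fun a b ↦ by rw [← abs_neg]; ring_nf
  simpa only [neg_neg, key] using H (-w) (-ρ) (fun e ↦ hρ (by simp [← e]))

lemma min_le_apply (hf : ConvexOn ℝ univ f) (H : IsAbsProx f h) {p : ℝ} (hp : h p = p)
    (θ : ℝ) : min θ p ≤ h θ := by
  by_contra! hlt
  set a := h θ
  have haθ : a < θ := lt_of_lt_of_le hlt (min_le_left _ _)
  have hap : a < p := lt_of_lt_of_le hlt (min_le_right _ _)
  have hθ := H θ θ haθ.ne'
  have hfix := H p a (by rw [hp]; exact hap.ne)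
  rw [hp, sub_self, abs_zero, add_zero, abs_of_neg (sub_neg.2 hap)] at hfix
  rw [sub_self, abs_zero, add_zero, abs_of_neg (sub_neg.2 haθ)] at hθ
  rcases le_or_gt p θ with hpθ | hθp
  · have hmin := H θ p hap.ne'
    rw [abs_of_neg (sub_neg.2 haθ), abs_of_nonpos (sub_nonpos.2 hpθ)] at hmin
    linarith
  · -- secant inequality on `a < θ < p` vs. slope `> 1` on `[a, θ]` and `< 1` on `[θ, p]`
    have hsec := hf.secant_mono_aux1 (mem_univ a) (mem_univ p) haθ hθp
    nlinarith [mul_lt_mul_of_pos_left hθ (sub_pos.2 hθp), mul_lt_mul_of_pos_left hfix (sub_pos.2 haθ)]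

lemma apply_le_max (hf : ConvexOn ℝ univ f) (H : IsAbsProx f h) {p : ℝ} (hp : h p = p)
    (θ : ℝ) : h θ ≤ max θ p := by
  have hf' : ConvexOn ℝ univ (fun x ↦ f (-x)) := hf.comp_linearMap (-LinearMap.id)
  have := H.comp_neg.min_le_apply hf' (p := -p) (by simp [hp]) (-θ)
  rwa [min_neg_neg, neg_neg, neg_le_neg_iff] at this

lemma apply_mem_uIcc (hf : ConvexOn ℝ univ f) (H : IsAbsProx f h) {p : ℝ} (hp : h p = p)
    (θ : ℝ) : h θ ∈ uIcc θ p :=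
  ⟨H.min_le_apply hf hp θ, H.apply_le_max hf hp θ⟩

end IsAbsProx

theorem stmt_17_general (f g : ℝ → ℝ)
    (hf : StrictConvexOn ℝ Set.univ f) (hg : StrictConvexOn ℝ Set.univ g)
    (ρs : ℝ → ℝ)
    (hρs : ∀ w ρ, ρ ≠ ρs w → f (ρs w) + |ρs w - w| < f ρ + |ρ - w|)
    (τs : ℝ → ℝ)
    (hτs : ∀ ρ t, t ≠ τs ρ → g (τs ρ) + |ρ - τs ρ| < g t + |ρ - t|) :
    ∀ θ w : ℝ, |τs (ρs θ) - θ| ≤ |τs (ρs w) - θ| := by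
  have hρ : IsAbsProx f ρs := hρs
  have hτ : IsAbsProx g τs := fun ρ t ht ↦ by
    simpa only [abs_sub_comm ρ] using hτs ρ t ht
  intro θ w
  have h₁ : ρs θ ∈ uIcc θ (ρs w) := hρ.apply_mem_uIcc hf.convexOn (hρ.apply_apply w) θ
  have h₂ : τs (ρs θ) ∈ uIcc (ρs θ) (τs (ρs w)) :=
    hτ.apply_mem_uIcc hg.convexOn (hτ.apply_apply _) _
  exact abs_sub_left_of_mem_uIcc (hτ.monotone.apply_mem_uIcc_of_mem_uIcc h₁ h₂)

/-- Composition strategyproofness in dimension 1: with `ρ*(w)` the minimizer of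
`ρ ↦ f(ρ) + |ρ - w|` and `τ*(ρ)` the minimizer of `t ↦ g(t) + |ρ - t|`,
`|τ*(ρ*(θ)) - θ| ≤ |τ*(ρ*(w)) - θ|` for all `θ, w`. -/
theorem stmt_17 (f g : ℝ → ℝ)
    (hf0 : ∀ x, 0 ≤ f x) (hg0 : ∀ x, 0 ≤ g x)
    (hf : StrictConvexOn ℝ Set.univ f) (hg : StrictConvexOn ℝ Set.univ g)
    (ρs : ℝ → ℝ)
    (hρs : ∀ w ρ, ρ ≠ ρs w → f (ρs w) + |ρs w - w| < f ρ + |ρ - w|)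
    (τs : ℝ → ℝ)
    (hτs : ∀ ρ t, t ≠ τs ρ → g (τs ρ) + |ρ - τs ρ| < g t + |ρ - t|) :
    ∀ θ w : ℝ, |τs (ρs θ) - θ| ≤ |τs (ρs w) - θ| :=
  stmt_17_general f g hf hg ρs hρs τs hτs
end

section
/- Consider the function L(ρ, θ) = C(ρ)^q + Σ_{n=1}^N λ_n N_n(θ_n − ρ) + Σ_{n=1}^N ℓ_n(θ_n), where C, N_1,…,N_N are norms on ℝ^d, q > 1, λ_n > 0, the unit ball of C is strictly convex, and each ℓ_n : ℝ^d → [0,∞) is strictly convex and continuous. Then L attains a minimum on ℝ^d × (ℝ^d)^N, and this minimizer is unique. -/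
/-!
The loss splits as `ρ ↦ C(ρ)^q` plus `θ ↦ ∑ ℓ_n(θ_n)` plus the coupling term `∑ λ_n N_n(θ_n - ρ)`.
The first is strictly convex: for `C x ≠ C y` by strict convexity and monotonicity of `t ↦ t^q`,
for `C x = C y` by strict convexity of the `C`-ball. The second is strictly convex in `θ` and the coupling is a
seminorm, so `L` is strictly convex on the product and has at most one minimiser.
For existence, `C^q ≥ C - 1` and `ℓ_n ≥ 0` give `L ≥ Φ - 1` with
`Φ(ρ, θ) = C(ρ) + ∑ λ_n N_n(θ_n - ρ)`, a norm on a finite-dimensional space; hence the continuous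
function `L` grows linearly and attains its minimum.
-/

open Set Filter

section Convexity

variable {E F : Type*} [AddCommGroup E] [Module ℝ E] [AddCommGroup F] [Module ℝ F]

theorem StrictConvexOn.fst_add_snd {g : E → ℝ} {h : F → ℝ} (hg : StrictConvexOn ℝ univ g)
    (hh : StrictConvexOn ℝ univ h) : StrictConvexOn ℝ univ fun p : E × F => g p.1 + h p.2 := by
  refine ⟨convex_univ, fun x _ y _ hxy a b ha hb hab => ?_⟩
  have hg_le := hg.convexOn.2 (mem_univ x.1) (mem_univ y.1) ha.le hb.le hab
  have hh_le := hh.convexOn.2 (mem_univ x.2) (mem_univ y.2) ha.le hb.le hab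
  simp only [Prod.fst_add, Prod.snd_add, Prod.smul_fst, Prod.smul_snd, smul_eq_mul] at hg_le hh_le ⊢
  rcases ne_or_eq x.1 y.1 with h1 | h1
  · have hg_lt := hg.2 (mem_univ x.1) (mem_univ y.1) h1 ha hb hab
    simp only [smul_eq_mul] at hg_lt
    linarith
  · have hh_lt := hh.2 (mem_univ x.2) (mem_univ y.2) (fun h2 => hxy (Prod.ext h1 h2)) ha hb hab
    simp only [smul_eq_mul] at hh_lt
    linarith

theorem strictConvexOn_sum_comp_eval {ι : Type*} [Fintype ι] {f : ι → E → ℝ}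
    (hf : ∀ i, StrictConvexOn ℝ univ (f i)) :
    StrictConvexOn ℝ univ fun x : ι → E => ∑ i, f i (x i) := by
  refine ⟨convex_univ, fun x _ y _ hxy a b ha hb hab => ?_⟩
  obtain ⟨i, hi⟩ := Function.ne_iff.mp hxy
  simp only [Pi.add_apply, Pi.smul_apply, smul_eq_mul, Finset.mul_sum, ← Finset.sum_add_distrib]
  exact Finset.sum_lt_sum (fun j _ => (hf j).convexOn.2 trivial trivial ha.le hb.le hab)
    ⟨i, Finset.mem_univ i, (hf i).2 trivial trivial hi ha hb hab⟩

end Convexity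

theorem Real.sub_one_le_rpow {t q : ℝ} (ht : 0 ≤ t) (hq : 1 ≤ q) : t - 1 ≤ t ^ q := by
  rcases le_or_gt t 1 with h | h
  · linarith [Real.rpow_nonneg ht q]
  · linarith [Real.self_le_rpow_of_one_le h.le hq]

theorem Continuous.exists_forall_le_of_linear_growth {X : Type*} [NormedAddCommGroup X]
    [ProperSpace X] {f : X → ℝ} (hf : Continuous f) {c b : ℝ} (hc : 0 < c)
    (hgrowth : ∀ x, c * ‖x‖ - b ≤ f x) : ∃ x, ∀ y, f x ≤ f y :=
  hf.exists_forall_le <| tendsto_atTop_mono hgrowth <|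
    tendsto_atTop_add_const_right _ (-b) (tendsto_norm_cocompact_atTop.const_mul_atTop hc)

namespace Seminorm

section Module

variable {E : Type*} [AddCommGroup E] [Module ℝ E] (p : Seminorm ℝ E)

theorem apply_combo_lt_of_apply_eq
    (hball : ∀ x y, x ≠ y → p x = 1 → p y = 1 →
      ∀ t : ℝ, 0 < t → t < 1 → p (t • x + (1 - t) • y) < 1)
    {x y : E} (hxy : x ≠ y) (hx : 0 < p x) (hpxy : p x = p y) {a b : ℝ} (ha : 0 < a) (hb : 0 < b)
    (hab : a + b = 1) : p (a • x + b • y) < p x := by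
  obtain rfl : b = 1 - a := by linarith
  have hunit : ∀ z, p z = p x → p ((p x)⁻¹ • z) = 1 := fun z hz => by
    rw [map_smul_eq_mul, norm_inv, Real.norm_of_nonneg hx.le, hz, inv_mul_cancel₀ hx.ne']
  have hne : (p x)⁻¹ • x ≠ (p x)⁻¹ • y := (smul_right_injective E (inv_ne_zero hx.ne')).ne hxy
  have h := hball _ _ hne (hunit x rfl) (hunit y hpxy.symm) a ha (by linarith)
  rwa [smul_comm a, smul_comm (1 - a), ← smul_add, map_smul_eq_mul, norm_inv,
    Real.norm_of_nonneg hx.le, inv_mul_lt_iff₀ hx, mul_one] at h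

theorem strictConvexOn_rpow (hp : ∀ x, p x = 0 → x = 0)
    (hball : ∀ x y, x ≠ y → p x = 1 → p y = 1 →
      ∀ t : ℝ, 0 < t → t < 1 → p (t • x + (1 - t) • y) < 1)
    {q : ℝ} (hq : 1 < q) : StrictConvexOn ℝ univ fun x => p x ^ q := by
  refine ⟨convex_univ, fun x _ y _ hxy a b ha hb hab => ?_⟩
  simp only [smul_eq_mul]
  rcases ne_or_eq (p x) (p y) with hne | heq
  · have hle : p (a • x + b • y) ≤ a * p x + b * p y := by
      simpa using p.convexOn.2 (mem_univ x) (mem_univ y) ha.le hb.le hab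
    calc p (a • x + b • y) ^ q ≤ (a * p x + b * p y) ^ q :=
          Real.rpow_le_rpow (apply_nonneg _ _) hle (by linarith)
      _ < a * p x ^ q + b * p y ^ q := by
          simpa using (_root_.strictConvexOn_rpow hq).2 (apply_nonneg p x) (apply_nonneg p y) hne
            ha hb hab
  · have hx : 0 < p x := (apply_nonneg p x).lt_of_ne' fun h0 =>
      hxy ((hp x h0).trans (hp y (heq ▸ h0)).symm)
    calc p (a • x + b • y) ^ q < p x ^ q := Real.rpow_lt_rpow (apply_nonneg _ _)
          (p.apply_combo_lt_of_apply_eq hball hxy hx heq ha hb hab) (by linarith)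
      _ = a * p x ^ q + b * p y ^ q := by rw [← heq, ← add_mul, hab, one_mul]

end Module

variable {E : Type*} [NormedAddCommGroup E] [NormedSpace ℝ E] [FiniteDimensional ℝ E]

theorem continuous_of_finiteDimensional (p : Seminorm ℝ E) : Continuous p :=
  p.convexOn.locallyLipschitz.continuous

theorem exists_pos_mul_norm_le (p : Seminorm ℝ E) (hp : ∀ x, p x = 0 → x = 0) :
    ∃ c > 0, ∀ x, c * ‖x‖ ≤ p x := by
  rcases subsingleton_or_nontrivial E with hE | hE
  · exact ⟨1, one_pos, fun x => by simp [Subsingleton.elim x 0]⟩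
  obtain ⟨x₀, hx₀, hmin⟩ := (isCompact_sphere (0 : E) 1).exists_isMinOn
    (NormedSpace.sphere_nonempty.mpr zero_le_one) p.continuous_of_finiteDimensional.continuousOn
  have hx₀0 : x₀ ≠ 0 := ne_zero_of_mem_unit_sphere ⟨x₀, hx₀⟩
  refine ⟨p x₀, (apply_nonneg p x₀).lt_of_ne' (mt (hp x₀) hx₀0), fun x => ?_⟩
  rcases eq_or_ne x 0 with rfl | hx
  · simp
  have hx' : 0 < ‖x‖ := norm_pos_iff.mpr hx
  have hle : p x₀ ≤ p (‖x‖⁻¹ • x) := hmin (by simp [norm_smul, hx'.ne'])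
  rw [map_smul_eq_mul, norm_inv, norm_norm] at hle
  calc p x₀ * ‖x‖ ≤ ‖x‖⁻¹ * p x * ‖x‖ := by gcongr
    _ = p x := by field_simp

end Seminorm

section Licchavi

variable {E ι : Type*} [Fintype ι]

section Module

variable [AddCommGroup E] [Module ℝ E]

noncomputable def couplingSeminorm (N : ι → Seminorm ℝ E) (lam : ι → ℝ) :
    Seminorm ℝ (E × (ι → E)) :=
  ∑ n, (lam n).toNNReal •
    (N n).comp (LinearMap.proj n ∘ₗ LinearMap.snd ℝ E (ι → E) - LinearMap.fst ℝ E (ι → E))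

theorem couplingSeminorm_apply (N : ι → Seminorm ℝ E) {lam : ι → ℝ} (hlam : ∀ n, 0 ≤ lam n)
    (p : E × (ι → E)) : couplingSeminorm N lam p = ∑ n, lam n * N n (p.2 n - p.1) := by
  simp [couplingSeminorm, NNReal.smul_def, Real.coe_toNNReal _ (hlam _)]

noncomputable def licchaviLoss (C : Seminorm ℝ E) (N : ι → Seminorm ℝ E) (q : ℝ)
    (lam : ι → ℝ) (ℓ : ι → E → ℝ) (p : E × (ι → E)) : ℝ :=
  C p.1 ^ q + ∑ n, lam n * N n (p.2 n - p.1) + ∑ n, ℓ n (p.2 n)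

theorem strictConvexOn_licchaviLoss (C : Seminorm ℝ E) (hC_def : ∀ x, C x = 0 → x = 0)
    (hC_ball : ∀ x y, x ≠ y → C x = 1 → C y = 1 →
      ∀ t : ℝ, 0 < t → t < 1 → C (t • x + (1 - t) • y) < 1)
    (N : ι → Seminorm ℝ E) {q : ℝ} (hq : 1 < q) {lam : ι → ℝ} (hlam : ∀ n, 0 ≤ lam n)
    {ℓ : ι → E → ℝ} (hℓ : ∀ n, StrictConvexOn ℝ univ (ℓ n)) :
    StrictConvexOn ℝ univ (licchaviLoss C N q lam ℓ) := by
  have hsplit : licchaviLoss C N q lam ℓ =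
      (fun p : E × (ι → E) => C p.1 ^ q + ∑ n, ℓ n (p.2 n)) + ⇑(couplingSeminorm N lam) := by
    funext p
    simp only [licchaviLoss, Pi.add_apply, couplingSeminorm_apply N hlam]
    ring
  rw [hsplit]
  exact ((C.strictConvexOn_rpow hC_def hC_ball hq).fst_add_snd
    (strictConvexOn_sum_comp_eval hℓ)).add_convexOn (couplingSeminorm N lam).convexOn

end Module

variable [NormedAddCommGroup E] [NormedSpace ℝ E] [FiniteDimensional ℝ E]

theorem continuous_licchaviLoss (C : Seminorm ℝ E) (N : ι → Seminorm ℝ E) {q : ℝ} (hq : 0 ≤ q)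
    (lam : ι → ℝ) {ℓ : ι → E → ℝ} (hℓ : ∀ n, Continuous (ℓ n)) :
    Continuous (licchaviLoss C N q lam ℓ) := by
  have hN : ∀ n, Continuous (N n) := fun n => (N n).continuous_of_finiteDimensional
  unfold licchaviLoss
  refine .add (.add ?_ ?_) ?_
  · exact (C.continuous_of_finiteDimensional.comp continuous_fst).rpow_const fun _ => Or.inr hq
  · fun_prop
  · fun_prop

theorem exists_pos_mul_norm_sub_one_le_licchaviLoss {C : Seminorm ℝ E}
    (hC_def : ∀ x, C x = 0 → x = 0) {N : ι → Seminorm ℝ E} (hN_def : ∀ n x, N n x = 0 → x = 0)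
    {q : ℝ} (hq : 1 ≤ q) {lam : ι → ℝ} (hlam : ∀ n, 0 < lam n) {ℓ : ι → E → ℝ}
    (hℓ : ∀ n x, 0 ≤ ℓ n x) : ∃ c > 0, ∀ p, c * ‖p‖ - 1 ≤ licchaviLoss C N q lam ℓ p := by
  set Φ := C.comp (LinearMap.fst ℝ E (ι → E)) + couplingSeminorm N lam
  have hΦ : ∀ p, Φ p = C p.1 + ∑ n, lam n * N n (p.2 n - p.1) := fun p => by
    simp [Φ, couplingSeminorm_apply N fun n => (hlam n).le]
  have hterm_nonneg : ∀ p : E × (ι → E), ∀ n ∈ Finset.univ, 0 ≤ lam n * N n (p.2 n - p.1) :=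
    fun p n _ => mul_nonneg (hlam n).le (apply_nonneg _ _)
  have hΦ_def : ∀ p, Φ p = 0 → p = 0 := by
    intro p hp
    rw [hΦ, add_eq_zero_iff_of_nonneg (apply_nonneg _ _) (Finset.sum_nonneg (hterm_nonneg p)),
      Finset.sum_eq_zero_iff_of_nonneg (hterm_nonneg p)] at hp
    have h1 : p.1 = 0 := hC_def _ hp.1
    refine Prod.ext h1 (funext fun n => ?_)
    have := hN_def n _ ((mul_eq_zero.mp (hp.2 n (Finset.mem_univ n))).resolve_left (hlam n).ne')
    simpa [h1] using this
  obtain ⟨c, hc, hcΦ⟩ := Φ.exists_pos_mul_norm_le hΦ_def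
  refine ⟨c, hc, fun p => ?_⟩
  have h1 := Real.sub_one_le_rpow (apply_nonneg C p.1) hq
  have h2 : 0 ≤ ∑ n, ℓ n (p.2 n) := Finset.sum_nonneg fun n _ => hℓ n _
  have h3 := hcΦ p
  rw [hΦ] at h3
  unfold licchaviLoss
  linarith

end Licchavi

theorem stmt_18_general (d M : ℕ)
    (C : (Fin d → ℝ) → ℝ)
    (hC_add : ∀ x y, C (x + y) ≤ C x + C y)
    (hC_smul : ∀ (c : ℝ) x, C (c • x) = |c| * C x)
    (hC_def : ∀ x, C x = 0 → x = 0)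
    (hC_ball : ∀ x y, x ≠ y → C x = 1 → C y = 1 →
      ∀ t : ℝ, 0 < t → t < 1 → C (t • x + (1 - t) • y) < 1)
    (Nf : Fin M → (Fin d → ℝ) → ℝ)
    (hN_add : ∀ n x y, Nf n (x + y) ≤ Nf n x + Nf n y)
    (hN_smul : ∀ n (c : ℝ) x, Nf n (c • x) = |c| * Nf n x)
    (hN_def : ∀ n x, Nf n x = 0 → x = 0)
    (q : ℝ) (hq : 1 < q)
    (lam : Fin M → ℝ) (hlam : ∀ n, 0 < lam n)
    (ℓ : Fin M → (Fin d → ℝ) → ℝ)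
    (hℓ0 : ∀ n x, 0 ≤ ℓ n x)
    (hℓconv : ∀ n, StrictConvexOn ℝ Set.univ (ℓ n))
    (hℓcont : ∀ n, Continuous (ℓ n)) :
    ∃! m : (Fin d → ℝ) × (Fin M → Fin d → ℝ),
      ∀ (ρ : Fin d → ℝ) (θ : Fin M → Fin d → ℝ),
        C m.1 ^ q + ∑ n, lam n * Nf n (m.2 n - m.1) + ∑ n, ℓ n (m.2 n)
          ≤ C ρ ^ q + ∑ n, lam n * Nf n (θ n - ρ) + ∑ n, ℓ n (θ n) := by
  obtain ⟨C, rfl⟩ : ∃ p : Seminorm ℝ (Fin d → ℝ), ⇑p = C :=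
    ⟨.of C hC_add fun c x => by rw [hC_smul, Real.norm_eq_abs], rfl⟩
  obtain ⟨N, rfl⟩ : ∃ p : Fin M → Seminorm ℝ (Fin d → ℝ), (fun n => ⇑(p n)) = Nf :=
    ⟨fun n => .of (Nf n) (hN_add n) fun c x => by rw [hN_smul, Real.norm_eq_abs], rfl⟩
  have hL := strictConvexOn_licchaviLoss C hC_def hC_ball N hq (fun n => (hlam n).le) hℓconv
  obtain ⟨c, hc, hgrowth⟩ :=
    exists_pos_mul_norm_sub_one_le_licchaviLoss hC_def hN_def hq.le hlam hℓ0
  obtain ⟨m, hm⟩ := (continuous_licchaviLoss C N (by linarith) lam hℓcont)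
    |>.exists_forall_le_of_linear_growth hc hgrowth
  exact ⟨m, fun ρ θ => hm (ρ, θ),
    fun m' hm' => hL.eq_of_isMinOn (fun p _ => hm' p.1 p.2) (fun p _ => hm p) trivial trivial⟩

/-- Existence and uniqueness of the minimizer of the Licchavi loss
`L(ρ, θ) = C(ρ)^q + Σ_n λ_n N_n(θ_n - ρ) + Σ_n ℓ_n(θ_n)`. -/
theorem stmt_18 (d M : ℕ)
    (C : (Fin d → ℝ) → ℝ)
    (hC_nonneg : ∀ x, 0 ≤ C x)
    (hC_add : ∀ x y, C (x + y) ≤ C x + C y)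
    (hC_smul : ∀ (c : ℝ) x, C (c • x) = |c| * C x)
    (hC_def : ∀ x, C x = 0 → x = 0)
    (hC_ball : ∀ x y, x ≠ y → C x = 1 → C y = 1 →
      ∀ t : ℝ, 0 < t → t < 1 → C (t • x + (1 - t) • y) < 1)
    (Nf : Fin M → (Fin d → ℝ) → ℝ)
    (hN_nonneg : ∀ n x, 0 ≤ Nf n x)
    (hN_add : ∀ n x y, Nf n (x + y) ≤ Nf n x + Nf n y)
    (hN_smul : ∀ n (c : ℝ) x, Nf n (c • x) = |c| * Nf n x)
    (hN_def : ∀ n x, Nf n x = 0 → x = 0)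
    (q : ℝ) (hq : 1 < q)
    (lam : Fin M → ℝ) (hlam : ∀ n, 0 < lam n)
    (ℓ : Fin M → (Fin d → ℝ) → ℝ)
    (hℓ0 : ∀ n x, 0 ≤ ℓ n x)
    (hℓconv : ∀ n, StrictConvexOn ℝ Set.univ (ℓ n))
    (hℓcont : ∀ n, Continuous (ℓ n)) :
    ∃! m : (Fin d → ℝ) × (Fin M → Fin d → ℝ),
      ∀ (ρ : Fin d → ℝ) (θ : Fin M → Fin d → ℝ),
        C m.1 ^ q + ∑ n, lam n * Nf n (m.2 n - m.1) + ∑ n, ℓ n (m.2 n)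
          ≤ C ρ ^ q + ∑ n, lam n * Nf n (θ n - ρ) + ∑ n, ℓ n (θ n) :=
  stmt_18_general d M C hC_add hC_smul hC_def hC_ball Nf hN_add hN_smul hN_def q hq lam hlam ℓ hℓ0
    hℓconv hℓcont
end

section
/- Consider the loss L(ρ, θ) = C(ρ)^q + Σ_{n=1}^N λ_n N_n(ρ − θ_n) + Σ_n ℓ_n(θ_n) with q > 1, and suppose each independent loss gradient is bounded in the sense that any subgradient of N_n at any point has ℓ₂-norm at most B_n, and C(ρ) ≥ β₀‖ρ‖₂ for all ρ with β₀ > 0. Then any minimizer (ρ*, θ*) of L satisfies ‖ρ*‖₂ ≤ ((Σ_n λ_n B_n) / (λ₀ q β₀^q))^{1/(q−1)}, where λ₀ > 0 is the weight of the regularization term C(ρ)^q (i.e., the term is λ₀ C(ρ)^q). -/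
/-!
Scaling the minimizer along the ray `t ↦ t • ρ*` (keeping `θ*`) shows, by minimality and the
triangle inequality for each `N_n`, that `λ₀ C(ρ*)^q (1 - t^q) ≤ (1 - t) Σ λ_n N_n(ρ*)` for
`t < 1`; letting `t → 1` gives the first-order condition `λ₀ q C(ρ*)^q ≤ Σ λ_n N_n(ρ*)`.
A seminorm whose subgradients are bounded by `B_n` is `B_n`-Lipschitz, since a Hahn–Banach
functional `g ≤ N_n` with `g x = N_n x` is a subgradient at `x`. Together with
`C(ρ) ≥ β₀‖ρ‖` this yields `λ₀ q β₀^q ‖ρ*‖^q ≤ (Σ λ_n B_n) ‖ρ*‖`.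
-/

open Filter Topology Set

namespace Seminorm

variable {E : Type*}

theorem exists_dual_le_and_apply_eq [AddCommGroup E] [Module ℝ E] (p : Seminorm ℝ E) (x : E) :
    ∃ g : Module.Dual ℝ E, (∀ y, g y ≤ p y) ∧ g x = p x := by
  rcases eq_or_ne x 0 with rfl | hx
  · exact ⟨0, fun y => by simp, by simp⟩
  let f : E →ₗ.[ℝ] ℝ := LinearPMap.mkSpanSingleton x (p x) hx
  obtain ⟨g, hgf, hgp⟩ := Module.Dual.exists_extension_of_le_seminorm_real f.domain f.toFun
    (p := p) fun ⟨z, hz⟩ => by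
      obtain ⟨c, rfl⟩ := Submodule.mem_span_singleton.1 hz
      change f ⟨c • x, hz⟩ ≤ p (c • x)
      rw [LinearPMap.mkSpanSingleton'_apply _ _ _ c hz, map_smul_eq_mul, smul_eq_mul,
        Real.norm_eq_abs]
      exact mul_le_mul_of_nonneg_right (le_abs_self c) (apply_nonneg p x)
  refine ⟨g, fun y => (le_abs_self _).trans (hgp y), ?_⟩
  rw [hgf ⟨x, Submodule.mem_span_singleton_self x⟩]
  exact LinearPMap.mkSpanSingleton_apply ℝ ℝ hx (p x)

theorem le_mul_norm_of_subgradient_norm_le [NormedAddCommGroup E] [InnerProductSpace ℝ E]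
    [FiniteDimensional ℝ E] (p : Seminorm ℝ E) {B : ℝ}
    (hB : ∀ x g : E, (∀ y, p x + inner ℝ g (y - x) ≤ p y) → ‖g‖ ≤ B) (x : E) :
    p x ≤ B * ‖x‖ := by
  obtain ⟨g, hgp, hgx⟩ := p.exists_dual_le_and_apply_eq x
  set v := (InnerProductSpace.toDual ℝ E).symm (LinearMap.toContinuousLinearMap g)
  have hv : ∀ y, inner ℝ v y = g y := fun y => InnerProductSpace.toDual_symm_apply
  have hvB : ‖v‖ ≤ B := hB x v fun y => by
    rw [hv, map_sub, ← hgx]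
    linarith [hgp y]
  calc p x = inner ℝ v x := by rw [hv, hgx]
    _ ≤ ‖v‖ * ‖x‖ := real_inner_le_norm v x
    _ ≤ B * ‖x‖ := by gcongr

theorem map_smul_sub_le [AddCommGroup E] [Module ℝ E] (p : Seminorm ℝ E) {t : ℝ} (ht : t ≤ 1)
    (x y : E) : p (t • x - y) ≤ p (x - y) + (1 - t) * p x := by
  calc p (t • x - y) = p ((x - y) - (1 - t) • x) := by rw [sub_smul, one_smul]; abel_nf
    _ ≤ p (x - y) + p ((1 - t) • x) := map_sub_le_add p _ _
    _ = p (x - y) + (1 - t) * p x := by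
      rw [map_smul_eq_mul, Real.norm_eq_abs, abs_of_nonneg (sub_nonneg.2 ht)]

theorem sum_mul_map_smul_sub_le {ι : Type*} [AddCommGroup E] [Module ℝ E] (s : Finset ι)
    (p : ι → Seminorm ℝ E) {w : ι → ℝ} (hw : ∀ i, 0 ≤ w i) {t : ℝ} (ht : t ≤ 1) (x : E)
    (y : ι → E) :
    ∑ i ∈ s, w i * p i (t • x - y i) ≤
      ∑ i ∈ s, w i * p i (x - y i) + (1 - t) * ∑ i ∈ s, w i * p i x := by
  rw [Finset.mul_sum, ← Finset.sum_add_distrib]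
  refine Finset.sum_le_sum fun i _ => ?_
  nlinarith [(p i).map_smul_sub_le ht x (y i), hw i]

end Seminorm

theorem mul_le_of_forall_mul_one_sub_rpow_le {a b q : ℝ}
    (h : ∀ t ∈ Ioo (0 : ℝ) 1, a * (1 - t ^ q) ≤ (1 - t) * b) : a * q ≤ b := by
  have hderiv : HasDerivAt (fun t : ℝ => t ^ q) q 1 := by
    simpa using Real.hasDerivAt_rpow_const (x := 1) (p := q) (Or.inl one_ne_zero)
  have hslope : Tendsto (fun t => a * slope (fun s : ℝ => s ^ q) 1 t) (𝓝[<] 1) (𝓝 (a * q)) :=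
    ((hasDerivAt_iff_tendsto_slope.1 hderiv).mono_left
      (nhdsWithin_mono 1 fun _ => ne_of_lt)).const_mul a
  refine le_of_tendsto hslope ?_
  filter_upwards [Ioo_mem_nhdsLT (zero_lt_one' ℝ)] with t ht
  have ht1 : 0 < 1 - t := sub_pos.2 ht.2
  rw [slope_def_field, Real.one_rpow, ← neg_div_neg_eq, neg_sub, neg_sub, ← mul_div_assoc,
    div_le_iff₀ ht1, mul_comm b]
  exact h t ht

theorem le_rpow_one_div_of_mul_rpow_le {A K q r : ℝ} (hA : 0 < A) (hK : 0 ≤ K) (hq : 1 < q)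
    (hr : 0 ≤ r) (h : A * r ^ q ≤ K * r) : r ≤ (K / A) ^ (1 / (q - 1)) := by
  rcases hr.eq_or_lt with rfl | hr
  · positivity
  rw [one_div, Real.le_rpow_inv_iff_of_pos hr.le (by positivity) (sub_pos.2 hq), le_div_iff₀ hA]
  have : r ^ q = r ^ (q - 1) * r := by
    rw [← Real.rpow_add_one hr.ne', sub_add_cancel]
  nlinarith [this]

theorem stmt_19_general (d M : ℕ)
    (C : EuclideanSpace ℝ (Fin d) → ℝ)
    (hC_nonneg : ∀ x, 0 ≤ C x)
    (hC_smul : ∀ (c : ℝ) x, C (c • x) = |c| * C x)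
    (Nf : Fin M → EuclideanSpace ℝ (Fin d) → ℝ)
    (hN_add : ∀ n x y, Nf n (x + y) ≤ Nf n x + Nf n y)
    (hN_smul : ∀ n (c : ℝ) x, Nf n (c • x) = |c| * Nf n x)
    (q : ℝ) (hq : 1 < q)
    (lam0 : ℝ) (hlam0 : 0 < lam0)
    (lam : Fin M → ℝ) (hlam : ∀ n, 0 < lam n)
    (β0 : ℝ) (hβ0 : 0 < β0) (hClow : ∀ ρ, β0 * ‖ρ‖ ≤ C ρ)
    (B : Fin M → ℝ) (hB : ∀ n, 0 < B n)
    (hBsub : ∀ (n : Fin M) (x g : EuclideanSpace ℝ (Fin d)),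
      (∀ y, Nf n x + (inner ℝ g (y - x) : ℝ) ≤ Nf n y) → ‖g‖ ≤ B n)
    (ℓ : Fin M → EuclideanSpace ℝ (Fin d) → ℝ)
    (ρstar : EuclideanSpace ℝ (Fin d)) (θstar : Fin M → EuclideanSpace ℝ (Fin d))
    (hmin : ∀ (ρ : EuclideanSpace ℝ (Fin d)) (θ : Fin M → EuclideanSpace ℝ (Fin d)),
      lam0 * C ρstar ^ q + ∑ n, lam n * Nf n (ρstar - θstar n) + ∑ n, ℓ n (θstar n)
        ≤ lam0 * C ρ ^ q + ∑ n, lam n * Nf n (ρ - θ n) + ∑ n, ℓ n (θ n)) :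
    ‖ρstar‖ ≤ ((∑ n, lam n * B n) / (lam0 * q * β0 ^ q)) ^ (1 / (q - 1)) := by
  let N n : Seminorm ℝ (EuclideanSpace ℝ (Fin d)) := Seminorm.of (Nf n) (hN_add n) (hN_smul n)
  set S := ∑ n, lam n * Nf n ρstar
  have hray : ∀ t ∈ Ioo (0 : ℝ) 1, lam0 * C ρstar ^ q * (1 - t ^ q) ≤ (1 - t) * S := by
    rintro t ⟨ht0, ht1⟩
    have hC : C (t • ρstar) ^ q = t ^ q * C ρstar ^ q := by
      rw [hC_smul, abs_of_pos ht0, Real.mul_rpow ht0.le (hC_nonneg _)]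
    have hN : ∑ n, lam n * Nf n (t • ρstar - θstar n) ≤
        ∑ n, lam n * Nf n (ρstar - θstar n) + (1 - t) * S :=
      Seminorm.sum_mul_map_smul_sub_le _ N (fun n => (hlam n).le) ht1.le ρstar θstar
    linear_combination hmin (t • ρstar) θstar + hN + lam0 * hC
  have hSB : S ≤ (∑ n, lam n * B n) * ‖ρstar‖ := by
    simp only [S, Finset.sum_mul, mul_assoc]
    exact Finset.sum_le_sum fun n _ => mul_le_mul_of_nonneg_left
      ((N n).le_mul_norm_of_subgradient_norm_le (hBsub n) ρstar) (hlam n).le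
  have hβ : β0 ^ q * ‖ρstar‖ ^ q ≤ C ρstar ^ q := by
    rw [← Real.mul_rpow hβ0.le (norm_nonneg _)]
    gcongr
    exact hClow ρstar
  refine le_rpow_one_div_of_mul_rpow_le (by positivity)
    (Finset.sum_nonneg fun n _ => (mul_pos (hlam n) (hB n)).le) hq (norm_nonneg _) ?_
  calc lam0 * q * β0 ^ q * ‖ρstar‖ ^ q = lam0 * q * (β0 ^ q * ‖ρstar‖ ^ q) := by ring
    _ ≤ lam0 * q * C ρstar ^ q := mul_le_mul_of_nonneg_left hβ (by positivity)
    _ = lam0 * C ρstar ^ q * q := by ring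
    _ ≤ S := mul_le_of_forall_mul_one_sub_rpow_le hray
    _ ≤ _ := hSB

/-- Absolute Byzantine resilience: any minimizer `(ρ*, θ*)` of the loss
`L(ρ,θ) = λ₀ C(ρ)^q + Σ_n λ_n N_n(ρ - θ_n) + Σ_n ℓ_n(θ_n)` satisfies
`‖ρ*‖₂ ≤ ((Σ_n λ_n B_n)/(λ₀ q β₀^q))^(1/(q-1))`. -/
theorem stmt_19 (d M : ℕ)
    (C : EuclideanSpace ℝ (Fin d) → ℝ)
    (hC_nonneg : ∀ x, 0 ≤ C x)
    (hC_add : ∀ x y, C (x + y) ≤ C x + C y)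
    (hC_smul : ∀ (c : ℝ) x, C (c • x) = |c| * C x)
    (hC_def : ∀ x, C x = 0 → x = 0)
    (Nf : Fin M → EuclideanSpace ℝ (Fin d) → ℝ)
    (hN_nonneg : ∀ n x, 0 ≤ Nf n x)
    (hN_add : ∀ n x y, Nf n (x + y) ≤ Nf n x + Nf n y)
    (hN_smul : ∀ n (c : ℝ) x, Nf n (c • x) = |c| * Nf n x)
    (hN_def : ∀ n x, Nf n x = 0 → x = 0)
    (q : ℝ) (hq : 1 < q)
    (lam0 : ℝ) (hlam0 : 0 < lam0)
    (lam : Fin M → ℝ) (hlam : ∀ n, 0 < lam n)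
    (β0 : ℝ) (hβ0 : 0 < β0) (hClow : ∀ ρ, β0 * ‖ρ‖ ≤ C ρ)
    (B : Fin M → ℝ) (hB : ∀ n, 0 < B n)
    (hBsub : ∀ (n : Fin M) (x g : EuclideanSpace ℝ (Fin d)),
      (∀ y, Nf n x + (inner ℝ g (y - x) : ℝ) ≤ Nf n y) → ‖g‖ ≤ B n)
    (ℓ : Fin M → EuclideanSpace ℝ (Fin d) → ℝ)
    (hℓconv : ∀ n, ConvexOn ℝ Set.univ (ℓ n))
    (ρstar : EuclideanSpace ℝ (Fin d)) (θstar : Fin M → EuclideanSpace ℝ (Fin d))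
    (hmin : ∀ (ρ : EuclideanSpace ℝ (Fin d)) (θ : Fin M → EuclideanSpace ℝ (Fin d)),
      lam0 * C ρstar ^ q + ∑ n, lam n * Nf n (ρstar - θstar n) + ∑ n, ℓ n (θstar n)
        ≤ lam0 * C ρ ^ q + ∑ n, lam n * Nf n (ρ - θ n) + ∑ n, ℓ n (θ n)) :
    ‖ρstar‖ ≤ ((∑ n, lam n * B n) / (lam0 * q * β0 ^ q)) ^ (1 / (q - 1)) :=
  stmt_19_general d M C hC_nonneg hC_smul Nf hN_add hN_smul q hq lam0 hlam0 lam hlam β0 hβ0 hClow B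
    hB hBsub ℓ ρstar θstar hmin
end
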